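/- Let (M, d) be a metric space, let L ⊆ M be a compact subset, let g : M → M be a continuous map, and let V ⊆ M be an open set such that every x ∈ L with g(x) ∈ L lies in V (that is, L ∩ g⁻¹(L) ⊆ V). Let (u_j)_{j∈ℕ} be a sequence of maps u_j : M → M that converges to the identity map uniformly on the compact set L \ V. Then: (1) for all sufficiently large j, g(u_j(L \ V)) ∩ L = ∅; and (2) if in addition each u_j restricts to the identity on V, then for all sufficiently large j one has g(u_j(L)) ∩ L = g(L) ∩ L. -/
import Mathlib


/-- Let `(M, d)` be a metric space, `L ⊆ M` compact, `g : M → M`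
continuous, `V ⊆ M` open with `L ∩ g⁻¹(L) ⊆ V`.  Let `u j : M → M` be a sequence
of maps converging to the identity uniformly on the compact set `L \ V`.  Then:
(1) for all sufficiently large `j`, `g(u j (L \ V)) ∩ L = ∅`; and
(2) if moreover each `u j` is the identity on `V`, then for all sufficiently
large `j`, `g(u j (L)) ∩ L = g(L) ∩ L`. -/
theorem stmt_3 {M : Type*} [MetricSpace M] (L : Set M) (hL : IsCompact L)
    (g : M → M) (hg : Continuous g) (V : Set M) (hV : IsOpen V)
    (hLV : L ∩ g ⁻¹' L ⊆ V) (u : ℕ → M → M)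
    (hu : TendstoUniformlyOn (fun j => u j) id Filter.atTop (L \ V)) :
    (∀ᶠ j in Filter.atTop, g '' (u j '' (L \ V)) ∩ L = ∅) ∧
      ((∀ j, ∀ x ∈ V, u j x = x) →
        ∀ᶠ j in Filter.atTop, g '' (u j '' L) ∩ L = g '' L ∩ L) := by
  set K : Set M := L \ V with hK
  have hKc : IsCompact K := hL.diff hV
  have hU : IsOpen (g ⁻¹' Lᶜ) := hg.isOpen_preimage _ hL.isClosed.isOpen_compl
  have hKU : K ⊆ g ⁻¹' Lᶜ := by
    intro x hx
    intro hgx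
    exact hx.2 (hLV ⟨hx.1, hgx⟩)
  obtain ⟨ε, hε, hthick⟩ := hKc.exists_thickening_subset_open hU hKU
  have hev : ∀ᶠ j in Filter.atTop, ∀ x ∈ K, dist (u j x) x < ε := by
    have := (Metric.tendstoUniformlyOn_iff.mp hu) ε hε
    filter_upwards [this] with j hj x hx
    have := hj x hx
    simpa [dist_comm] using this
  have key : ∀ᶠ j in Filter.atTop, g '' (u j '' K) ∩ L = ∅ := by
    filter_upwards [hev] with j hj
    ext y
    simp only [Set.mem_inter_iff, Set.mem_image, Set.mem_empty_iff_false, iff_false]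
    rintro ⟨⟨z, ⟨x, hx, rfl⟩, rfl⟩, hyL⟩
    have : u j x ∈ Metric.thickening ε K :=
      Metric.mem_thickening_iff.mpr ⟨x, hx, hj x hx⟩
    exact hthick this hyL
  refine ⟨key, fun hid => ?_⟩
  filter_upwards [key] with j hj
  have hLsplit : L = K ∪ (L ∩ V) := by
    ext x; by_cases hx : x ∈ V <;> simp [hK, hx]
  have himV : u j '' (L ∩ V) = L ∩ V := by
    ext x
    constructor
    · rintro ⟨y, hy, rfl⟩; rw [hid j y hy.2]; exact hy
    · intro hx; exact ⟨x, hx, hid j x hx.2⟩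
  have hgK : g '' K ∩ L = ∅ := by
    ext y
    simp only [Set.mem_inter_iff, Set.mem_image, Set.mem_empty_iff_false, iff_false]
    rintro ⟨⟨x, hx, rfl⟩, hyL⟩
    exact hKU hx hyL
  have h1 : u j '' L = u j '' K ∪ (L ∩ V) := by
    conv_lhs => rw [hLsplit]
    rw [Set.image_union, himV]
  have h2 : g '' L ∩ L = g '' (L ∩ V) ∩ L := by
    have hgL : g '' L = g '' K ∪ g '' (L ∩ V) := by
      rw [← Set.image_union, ← hLsplit]
    rw [hgL, Set.union_inter_distrib_right, hgK, Set.empty_union]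
  rw [h1, Set.image_union, Set.union_inter_distrib_right, hj, Set.empty_union, h2]
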